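/- For probability pairs (a₁,b₁) and (a₂,b₂) of non-negative reals (each pair not both zero), the capacity penalty of a degrading merge is non-negative: Δ(a₁,b₁;a₂,b₂) = C(a₁,b₁) + C(a₂,b₂) − C(a₁+a₂, b₁+b₂) ≥ 0, where C(a,b) = −(a+b)log₂((a+b)/2) + a log₂ a + b log₂ b (with 0·log₂0 = 0). -/

import Mathlib

/-!
Up to the factor `log 2` and a linear term, `Cpair a b` is
`g(a, b) = a log (a / (a + b)) + b log (b / (a + b))`, so the theorem says that `g` is
subadditive. Applying the log-sum inequality to the `a`-column and to the `b`-column, each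
against the row totals `aᵢ + bᵢ`, and adding gives exactly
`g(a₁ + a₂, b₁ + b₂) ≤ g(a₁, b₁) + g(a₂, b₂)`.
-/

/-- Capacity contribution of a probability pair `(a,b)`; `Real.logb 2 0 = 0`
implements the convention `0·log₂0 = 0`. -/
noncomputable def Cpair (a b : ℝ) : ℝ :=
  -(a + b) * Real.logb 2 (a + b) + a * Real.logb 2 a + b * Real.logb 2 b + (a + b)

/-- Capacity loss of a degrading merge of two probability pairs. -/
noncomputable def deltaMerge (a₁ b₁ a₂ b₂ : ℝ) : ℝ :=
  Cpair a₁ b₁ + Cpair a₂ b₂ - Cpair (a₁ + a₂) (b₁ + b₂)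

open Real

lemma mul_log_div_eq (a : ℝ) {u : ℝ} (hu : u ≠ 0) : a * log (a / u) = a * log a - a * log u := by
  rcases eq_or_ne a 0 with rfl | ha
  · simp
  · rw [log_div ha hu]; ring

/-- The log-sum inequality, as Jensen's inequality for `x ↦ x log x` at the points `a / u`,
`b / v` with weights proportional to `u`, `v`. -/
lemma add_mul_log_div_add_le {a b u v : ℝ} (ha : 0 ≤ a) (hb : 0 ≤ b) (hu : 0 < u) (hv : 0 < v) :
    (a + b) * log ((a + b) / (u + v)) ≤ a * log (a / u) + b * log (b / v) := by
  have huv : 0 < u + v := add_pos hu hv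
  have jensen := convexOn_mul_log.2 (Set.mem_Ici.2 (div_nonneg ha hu.le))
    (Set.mem_Ici.2 (div_nonneg hb hv.le)) (div_nonneg hu.le huv.le) (div_nonneg hv.le huv.le)
    (by field_simp)
  have hmean : u / (u + v) * (a / u) + v / (u + v) * (b / v) = (a + b) / (u + v) := by
    field_simp
  simp only [smul_eq_mul, hmean] at jensen
  calc (a + b) * log ((a + b) / (u + v))
      = (u + v) * ((a + b) / (u + v) * log ((a + b) / (u + v))) := by field_simp
    _ ≤ (u + v) * (u / (u + v) * (a / u * log (a / u)) + v / (u + v) * (b / v * log (b / v))) :=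
        by gcongr
    _ = a * log (a / u) + b * log (b / v) := by field_simp

lemma Cpair_mul_log_two (a b : ℝ) (hab : a + b ≠ 0) :
    Cpair a b * log 2 = a * log (a / (a + b)) + b * log (b / (a + b)) + (a + b) * log 2 := by
  rw [mul_log_div_eq a hab, mul_log_div_eq b hab]
  simp only [Cpair, logb]
  field_simp
  ring

/-- the capacity penalty of a degrading merge is non-negative. -/
theorem deltaMerge_nonneg (a₁ b₁ a₂ b₂ : ℝ)
    (ha₁ : 0 ≤ a₁) (hb₁ : 0 ≤ b₁) (ha₂ : 0 ≤ a₂) (hb₂ : 0 ≤ b₂)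
    (h₁ : 0 < a₁ + b₁) (h₂ : 0 < a₂ + b₂) :
    0 ≤ deltaMerge a₁ b₁ a₂ b₂ := by
  have htotal : a₁ + b₁ + (a₂ + b₂) = a₁ + a₂ + (b₁ + b₂) := by ring
  have column_a := add_mul_log_div_add_le ha₁ ha₂ h₁ h₂
  have column_b := add_mul_log_div_add_le hb₁ hb₂ h₁ h₂
  rw [htotal] at column_a column_b
  refine nonneg_of_mul_nonneg_left ?_ (log_pos one_lt_two)
  rw [deltaMerge, sub_mul, add_mul, Cpair_mul_log_two _ _ h₁.ne', Cpair_mul_log_two _ _ h₂.ne',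
    Cpair_mul_log_two _ _ (htotal ▸ add_pos h₁ h₂).ne']
  linarith
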